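/- Let G be a finite simple connected graph of order n with minimum degree δ. Then ((δ+n−1)√(δ(n−1)) / (2(δ² + (n−1)²)))·SDD(G) ≤ AG(G) ≤ (1/2)·SDD(G); the left equality holds if and only if G is isomorphic to the star K_{1,n−1} or to the complete graph K_n, and the right equality holds if and only if G is δ-regular. -/

import Mathlib

open SimpleGraph

/-- The degree of a vertex, as a natural number (classical, to avoid decidability assumptions). -/
noncomputable def ndeg {V : Type*} [Fintype V] (G : SimpleGraph V) (v : V) : ℕ :=
  letI := Classical.decRel G.Adj
  G.degree v

/-- The degree of a vertex, as a real number. -/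
noncomputable def deg {V : Type*} [Fintype V] (G : SimpleGraph V) (v : V) : ℝ :=
  (ndeg G v : ℝ)

/-- For a symmetric function `f`, `edgeSum G f = Σ_{uv ∈ E(G)} f (d_u) (d_v)`:
each unordered edge is counted twice in the double sum, hence the factor `1/2`. -/
noncomputable def edgeSum {V : Type*} [Fintype V] (G : SimpleGraph V) (f : ℝ → ℝ → ℝ) : ℝ :=
  letI := Classical.decRel G.Adj
  (1 / 2) * ∑ u : V, ∑ w : V, if G.Adj u w then f (deg G u) (deg G w) else 0

/-- The arithmetic-geometric index `AG(G) = Σ_{uv ∈ E(G)} (1/2)(√(d_u/d_v) + √(d_v/d_u))`. -/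
noncomputable def AG {V : Type*} [Fintype V] (G : SimpleGraph V) : ℝ :=
  edgeSum G (fun x y => (Real.sqrt (x / y) + Real.sqrt (y / x)) / 2)

/-- The first geometric-arithmetic index `GA(G) = Σ_{uv ∈ E(G)} 2√(d_u d_v)/(d_u + d_v)`. -/
noncomputable def GA {V : Type*} [Fintype V] (G : SimpleGraph V) : ℝ :=
  edgeSum G (fun x y => 2 * Real.sqrt (x * y) / (x + y))

/-- The forgotten index `F(G) = Σ_{uv ∈ E(G)} (d_u² + d_v²)`. -/
noncomputable def forgottenIndex {V : Type*} [Fintype V] (G : SimpleGraph V) : ℝ :=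
  edgeSum G (fun x y => x ^ 2 + y ^ 2)

/-- The first Zagreb index `M₁(G) = Σ_{uv ∈ E(G)} (d_u + d_v)`. -/
noncomputable def M1 {V : Type*} [Fintype V] (G : SimpleGraph V) : ℝ :=
  edgeSum G (fun x y => x + y)

/-- The second Zagreb index `M₂(G) = Σ_{uv ∈ E(G)} d_u d_v`. -/
noncomputable def M2 {V : Type*} [Fintype V] (G : SimpleGraph V) : ℝ :=
  edgeSum G (fun x y => x * y)

/-- The symmetric division deg index `SDD(G) = Σ_{uv ∈ E(G)} (d_u/d_v + d_v/d_u)`. -/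
noncomputable def SDD {V : Type*} [Fintype V] (G : SimpleGraph V) : ℝ :=
  edgeSum G (fun x y => x / y + y / x)

/-- The atom-bond connectivity index `ABC(G) = Σ_{uv ∈ E(G)} √((d_u + d_v − 2)/(d_u d_v))`. -/
noncomputable def ABC {V : Type*} [Fintype V] (G : SimpleGraph V) : ℝ :=
  edgeSum G (fun x y => Real.sqrt ((x + y - 2) / (x * y)))

/-- `G` is `(s,r)`-semiregular: its vertex set is the disjoint union of two nonempty sets,
all vertices of the first having degree `s` and all vertices of the second degree `r`. -/
def IsSemiregular {V : Type*} [Fintype V] (G : SimpleGraph V) (s r : ℕ) : Prop :=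
  ∃ V₁ V₂ : Set V, V₁.Nonempty ∧ V₂.Nonempty ∧ Disjoint V₁ V₂ ∧ V₁ ∪ V₂ = Set.univ ∧
    (∀ v ∈ V₁, ndeg G v = s) ∧ (∀ v ∈ V₂, ndeg G v = r)

/-!
With `k = √(x/y) + √(y/x)`, an edge whose ends have degrees `x, y` contributes `k / 2` to `AG`
and `k² - 2` to `SDD`. As `k ≥ 2`, `k / 2 ≤ (k² - 2) / 2`, with equality only for `x = y`;
summing over the edges gives the upper bound, and along a connected graph equal degrees at
the ends of every edge means regularity. If all degrees lie in `[a, b]` with `a = δ`, `b = n - 1`,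
then `k ≤ K := √(a/b) + √(b/a)`, with equality only if `{x, y} = {a, b}`; the constant of the
lower bound is `K / (2 (K² - 2))`, and `K / (2 (K² - 2)) · (k² - 2) ≤ k / 2` on `[2, K]`.
Equality therefore makes every edge join a vertex of degree `δ` to a universal vertex, which
happens exactly in a star and in a complete graph.
-/

open Real

section RatioSum

variable {p q s t : ℝ}

lemma two_le_div_add_div (hs : 0 < s) (ht : 0 < t) : 2 ≤ s / t + t / s := by
  rw [div_add_div _ _ ht.ne' hs.ne', le_div_iff₀ (by positivity)]
  nlinarith [sq_nonneg (s - t)]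

lemma div_add_div_eq_two_iff (hs : 0 < s) (ht : 0 < t) : s / t + t / s = 2 ↔ s = t := by
  refine ⟨fun h => ?_, fun h => by rw [h, div_self ht.ne']; norm_num⟩
  rw [div_add_div _ _ ht.ne' hs.ne', div_eq_iff (by positivity)] at h
  nlinarith [sq_nonneg (s - t)]

/-- Cross-multiplied, the gap is `(q s - p t) (q t - p s) ≥ 0`. -/
lemma div_add_div_le_div_add_div (hp : 0 < p) (hps : p ≤ s) (hsq : s ≤ q) (hpt : p ≤ t)
    (htq : t ≤ q) : s / t + t / s ≤ p / q + q / p := by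
  have hs : 0 < s := hp.trans_le hps
  have ht : 0 < t := hp.trans_le hpt
  have hq : 0 < q := hs.trans_le hsq
  rw [div_add_div _ _ ht.ne' hs.ne', div_add_div _ _ hq.ne' hp.ne',
    div_le_div_iff₀ (by positivity) (by positivity)]
  nlinarith [mul_nonneg (sub_nonneg.2 (mul_le_mul hps htq ht.le hs.le))
    (sub_nonneg.2 (mul_le_mul hpt hsq hs.le ht.le))]

lemma div_add_div_eq_div_add_div_iff (hp : 0 < p) (hps : p ≤ s) (hsq : s ≤ q) (hpt : p ≤ t)
    (htq : t ≤ q) :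
    s / t + t / s = p / q + q / p ↔ (s = p ∧ t = q) ∨ (s = q ∧ t = p) := by
  have hs : 0 < s := hp.trans_le hps
  have ht : 0 < t := hp.trans_le hpt
  have hq : 0 < q := hs.trans_le hsq
  refine ⟨fun h => ?_, ?_⟩
  · rw [div_add_div _ _ ht.ne' hs.ne', div_add_div _ _ hq.ne' hp.ne',
      div_eq_div_iff (by positivity) (by positivity)] at h
    have hfac : (q * s - p * t) * (q * t - p * s) = 0 := by linear_combination -h
    rcases mul_eq_zero.1 hfac with h | h
    · exact Or.inl ⟨le_antisymm (by nlinarith) hps, le_antisymm htq (by nlinarith)⟩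
    · exact Or.inr ⟨le_antisymm hsq (by nlinarith), le_antisymm (by nlinarith) hpt⟩
  · rintro (⟨rfl, rfl⟩ | ⟨rfl, rfl⟩)
    · rfl
    · exact add_comm _ _

end RatioSum

section QuadraticComparison

variable {k K : ℝ}

lemma div_two_le_half_mul_sq_sub_two (hk : 2 ≤ k) : k / 2 ≤ 1 / 2 * (k ^ 2 - 2) := by
  nlinarith

lemma div_two_eq_half_mul_sq_sub_two_iff (hk : 2 ≤ k) :
    k / 2 = 1 / 2 * (k ^ 2 - 2) ↔ k = 2 := by
  refine ⟨fun h => ?_, by rintro rfl; norm_num⟩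
  have : (k - 2) * (k + 1) = 0 := by linear_combination -2 * h
  rcases mul_eq_zero.1 this with h | h <;> linarith

lemma div_mul_sq_sub_two_le_div_two (hk : 2 ≤ k) (hkK : k ≤ K) :
    K / (2 * (K ^ 2 - 2)) * (k ^ 2 - 2) ≤ k / 2 := by
  rw [div_mul_eq_mul_div, div_le_div_iff₀ (by nlinarith) (by norm_num)]
  nlinarith [mul_nonneg (sub_nonneg.2 hkK) (by nlinarith : (0 : ℝ) ≤ K * k + 2)]

lemma div_mul_sq_sub_two_eq_div_two_iff (hk : 2 ≤ k) (hkK : k ≤ K) :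
    K / (2 * (K ^ 2 - 2)) * (k ^ 2 - 2) = k / 2 ↔ k = K := by
  rw [div_mul_eq_mul_div, div_eq_div_iff (by nlinarith) (by norm_num)]
  refine ⟨fun h => ?_, by rintro rfl; ring⟩
  have : (K - k) * (K * k + 2) = 0 := by linear_combination (-1 / 2) * h
  rcases mul_eq_zero.1 this with h | h <;> nlinarith

end QuadraticComparison

section EdgeTerms

-- `AG G = edgeSum G agTerm` and `SDD G = edgeSum G sddTerm` definitionally.
noncomputable def agTerm (x y : ℝ) : ℝ := (√(x / y) + √(y / x)) / 2

noncomputable def sddTerm (x y : ℝ) : ℝ := x / y + y / x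

variable {a b x y : ℝ}

lemma agTerm_eq (hx : 0 ≤ x) (hy : 0 ≤ y) : agTerm x y = (√x / √y + √y / √x) / 2 := by
  rw [agTerm, sqrt_div hx, sqrt_div hy]

lemma sddTerm_eq (hx : 0 < x) (hy : 0 < y) :
    sddTerm x y = (√x / √y + √y / √x) ^ 2 - 2 := by
  obtain ⟨s, hs, rfl⟩ : ∃ s, 0 < s ∧ x = s ^ 2 :=
    ⟨√x, sqrt_pos.2 hx, (sq_sqrt hx.le).symm⟩
  obtain ⟨t, ht, rfl⟩ : ∃ t, 0 < t ∧ y = t ^ 2 :=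
    ⟨√y, sqrt_pos.2 hy, (sq_sqrt hy.le).symm⟩
  rw [sddTerm, sqrt_sq hs.le, sqrt_sq ht.le]
  field_simp
  ring

lemma add_mul_sqrt_mul_div_eq (ha : 0 < a) (hb : 0 < b) :
    (a + b) * √(a * b) / (2 * (a ^ 2 + b ^ 2)) =
      (√a / √b + √b / √a) / (2 * ((√a / √b + √b / √a) ^ 2 - 2)) := by
  obtain ⟨p, hp, rfl⟩ : ∃ p, 0 < p ∧ a = p ^ 2 :=
    ⟨√a, sqrt_pos.2 ha, (sq_sqrt ha.le).symm⟩
  obtain ⟨q, hq, rfl⟩ : ∃ q, 0 < q ∧ b = q ^ 2 :=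
    ⟨√b, sqrt_pos.2 hb, (sq_sqrt hb.le).symm⟩
  have hK : (p / q + q / p) ^ 2 - 2 = ((p ^ 2) ^ 2 + (q ^ 2) ^ 2) / (p * q) ^ 2 := by
    field_simp
    ring
  rw [sqrt_mul (sq_nonneg p), sqrt_sq hp.le, sqrt_sq hq.le, hK]
  field_simp

lemma agTerm_le_half_mul_sddTerm (hx : 0 < x) (hy : 0 < y) :
    agTerm x y ≤ 1 / 2 * sddTerm x y := by
  rw [agTerm_eq hx.le hy.le, sddTerm_eq hx hy]
  exact div_two_le_half_mul_sq_sub_two (two_le_div_add_div (sqrt_pos.2 hx) (sqrt_pos.2 hy))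

lemma agTerm_eq_half_mul_sddTerm_iff (hx : 0 < x) (hy : 0 < y) :
    agTerm x y = 1 / 2 * sddTerm x y ↔ x = y := by
  have hs := sqrt_pos.2 hx
  have ht := sqrt_pos.2 hy
  rw [agTerm_eq hx.le hy.le, sddTerm_eq hx hy,
    div_two_eq_half_mul_sq_sub_two_iff (two_le_div_add_div hs ht),
    div_add_div_eq_two_iff hs ht, sqrt_inj hx.le hy.le]

lemma mul_sddTerm_le_agTerm (ha : 0 < a) (hx : x ∈ Set.Icc a b) (hy : y ∈ Set.Icc a b) :
    (a + b) * √(a * b) / (2 * (a ^ 2 + b ^ 2)) * sddTerm x y ≤ agTerm x y := by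
  obtain ⟨hax, hxb⟩ := hx
  obtain ⟨hay, hyb⟩ := hy
  have hx := ha.trans_le hax
  have hy := ha.trans_le hay
  rw [add_mul_sqrt_mul_div_eq ha (hx.trans_le hxb), agTerm_eq hx.le hy.le, sddTerm_eq hx hy]
  exact div_mul_sq_sub_two_le_div_two (two_le_div_add_div (sqrt_pos.2 hx) (sqrt_pos.2 hy))
    (div_add_div_le_div_add_div (sqrt_pos.2 ha) (sqrt_le_sqrt hax) (sqrt_le_sqrt hxb)
      (sqrt_le_sqrt hay) (sqrt_le_sqrt hyb))

lemma mul_sddTerm_eq_agTerm_iff (ha : 0 < a) (hx : x ∈ Set.Icc a b) (hy : y ∈ Set.Icc a b) :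
    (a + b) * √(a * b) / (2 * (a ^ 2 + b ^ 2)) * sddTerm x y = agTerm x y ↔
      (x = a ∧ y = b) ∨ (x = b ∧ y = a) := by
  obtain ⟨hax, hxb⟩ := hx
  obtain ⟨hay, hyb⟩ := hy
  have hx := ha.trans_le hax
  have hy := ha.trans_le hay
  have hb := hx.trans_le hxb
  have hpq := div_add_div_le_div_add_div (sqrt_pos.2 ha) (sqrt_le_sqrt hax) (sqrt_le_sqrt hxb)
    (sqrt_le_sqrt hay) (sqrt_le_sqrt hyb)
  rw [add_mul_sqrt_mul_div_eq ha hb, agTerm_eq hx.le hy.le, sddTerm_eq hx hy,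
    div_mul_sq_sub_two_eq_div_two_iff (two_le_div_add_div (sqrt_pos.2 hx) (sqrt_pos.2 hy)) hpq,
    div_add_div_eq_div_add_div_iff (sqrt_pos.2 ha) (sqrt_le_sqrt hax) (sqrt_le_sqrt hxb)
      (sqrt_le_sqrt hay) (sqrt_le_sqrt hyb),
    sqrt_inj hx.le ha.le, sqrt_inj hy.le hb.le, sqrt_inj hx.le hb.le, sqrt_inj hy.le ha.le]

end EdgeTerms

namespace SimpleGraph

variable {V W : Type*}

lemma Preconnected.eq_of_forall_adj {G : SimpleGraph V} {α : Type*} {f : V → α}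
    (hG : G.Preconnected) (hf : ∀ u w, G.Adj u w → f u = f w) (u w : V) : f u = f w := by
  obtain ⟨p⟩ := hG u w
  induction p with
  | nil => rfl
  | cons h _ ih => exact (hf _ _ h).trans ih

lemma completeBipartiteGraph_fin_one (m : ℕ) :
    completeBipartiteGraph (Fin 1) (Fin m) = starGraph (Sum.inl 0) := by
  ext x y
  rw [starGraph_adj]
  rcases x with x | x <;> rcases y with y | y <;> simp [Fin.fin_one_eq_zero]

lemma Iso.eq_starGraph {G : SimpleGraph V} {r : W} (e : G ≃g starGraph r) :
    G = starGraph (e.symm r) := by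
  ext x y
  rw [← e.map_rel_iff, starGraph_adj, starGraph_adj, e.injective.ne_iff, e.eq_symm_apply,
    e.eq_symm_apply]

lemma nonempty_iso_starGraph [Fintype V] [Fintype W] (h : Fintype.card V = Fintype.card W)
    (c : V) (r : W) : Nonempty (starGraph c ≃g starGraph r) := by
  classical
  let e₀ := Fintype.equivOfCardEq h
  let e := e₀.trans (Equiv.swap (e₀ c) r)
  have hc : e c = r := by simp [e]
  refine ⟨⟨e, fun {x y} => ?_⟩⟩
  rw [starGraph_adj, starGraph_adj, e.injective.ne_iff, ← hc, e.injective.eq_iff,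
    e.injective.eq_iff]

lemma Iso.eq_top {G : SimpleGraph V} (e : G ≃g (⊤ : SimpleGraph W)) : G = ⊤ :=
  eq_top_iff_forall_ne_adj.2 fun _ _ h => e.map_rel_iff.1 (e.injective.ne h)

variable [Fintype V] {G : SimpleGraph V} {n : ℕ}

lemma nonempty_iso_completeBipartiteGraph_fin_one_iff (hn : Fintype.card V = n) :
    Nonempty (G ≃g completeBipartiteGraph (Fin 1) (Fin (n - 1))) ↔ ∃ c, G = starGraph c := by
  rw [completeBipartiteGraph_fin_one]
  refine ⟨fun ⟨e⟩ => ⟨_, e.eq_starGraph⟩, ?_⟩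
  rintro ⟨c, rfl⟩
  have : 0 < n := hn ▸ Fintype.card_pos_iff.2 ⟨c⟩
  refine nonempty_iso_starGraph ?_ _ _
  simp only [Fintype.card_sum, Fintype.card_unique, Fintype.card_fin]
  omega

lemma nonempty_iso_top_fin_iff (hn : Fintype.card V = n) :
    Nonempty (G ≃g (⊤ : SimpleGraph (Fin n))) ↔ G = ⊤ := by
  refine ⟨fun ⟨e⟩ => e.eq_top, ?_⟩
  rintro rfl
  exact ⟨Iso.completeGraph (Fintype.equivFinOfCardEq hn)⟩

end SimpleGraph

section Degrees

variable {V : Type*} [Fintype V] {G : SimpleGraph V}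

lemma ndeg_eq_degree [DecidableRel G.Adj] (v : V) : ndeg G v = G.degree v := by
  unfold ndeg
  congr!

lemma ndeg_lt_card (v : V) : ndeg G v < Fintype.card V := by
  classical
  exact ndeg_eq_degree (G := G) v ▸ G.degree_lt_card_verts v

lemma ndeg_eq_card_sub_one_iff (v : V) : ndeg G v = Fintype.card V - 1 ↔ G.IsUniversal v := by
  classical
  rw [ndeg_eq_degree, degree_eq_card_sub_one]

lemma SimpleGraph.Preconnected.ndeg_pos [Nontrivial V] (hG : G.Preconnected) (v : V) :
    0 < ndeg G v := by
  classical
  exact ndeg_eq_degree (G := G) v ▸ hG.degree_pos_of_nontrivial v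

def EdgesJoinDegrees (G : SimpleGraph V) (a b : ℕ) : Prop :=
  ∀ u w, G.Adj u w → (ndeg G u = a ∧ ndeg G w = b) ∨ (ndeg G u = b ∧ ndeg G w = a)

variable {δ : ℕ}

lemma eq_starGraph_or_eq_top_of_edgesJoinDegrees (hδ : IsLeast (Set.range (ndeg G)) δ)
    (hδ0 : 0 < δ) (h : EdgesJoinDegrees G δ (Fintype.card V - 1)) :
    (∃ c, G = starGraph c) ∨ G = ⊤ := by
  classical
  have hle : ∀ v, δ ≤ ndeg G v := fun v => hδ.2 ⟨v, rfl⟩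
  have hlt : ∀ v, ndeg G v < Fintype.card V := ndeg_lt_card
  obtain ⟨v₀, hv₀⟩ := hδ.1
  by_cases hδmax : δ = Fintype.card V - 1
  · refine Or.inr (eq_top_iff_forall_isUniversal.2 fun v => ?_)
    rw [← ndeg_eq_card_sub_one_iff]
    have := hle v
    have := hlt v
    omega
  -- the centre is any neighbour of a vertex of minimum degree
  obtain ⟨c, hv₀c⟩ :=
    (G.degree_pos_iff_exists_adj v₀).1 (ndeg_eq_degree (G := G) v₀ ▸ hv₀ ▸ hδ0)
  have hc : ndeg G c = Fintype.card V - 1 := by rcases h v₀ c hv₀c with h' | h' <;> omega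
  have hcU : G.IsUniversal c := (ndeg_eq_card_sub_one_iff c).1 hc
  have hleaf : ∀ u, u ≠ c → ndeg G u = δ := fun u hu => by
    rcases h u c (hcU hu.symm).symm with h' | h' <;> omega
  refine Or.inl ⟨c, ?_⟩
  ext x y
  rw [starGraph_adj]
  refine ⟨fun hxy => ⟨hxy.ne, ?_⟩, ?_⟩
  · by_contra! hne
    have := hleaf x hne.1
    have := hleaf y hne.2
    rcases h x y hxy with h' | h' <;> omega
  · rintro ⟨hne, rfl | rfl⟩
    exacts [hcU hne, (hcU hne.symm).symm]

lemma edgesJoinDegrees_iff [Nontrivial V] {n : ℕ} (hn : Fintype.card V = n)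
    (hδ : IsLeast (Set.range (ndeg G)) δ) (hδ0 : 0 < δ) :
    EdgesJoinDegrees G δ (n - 1) ↔ (∃ c, G = starGraph c) ∨ G = ⊤ := by
  classical
  subst hn
  refine ⟨eq_starGraph_or_eq_top_of_edgesJoinDegrees hδ hδ0, ?_⟩
  rintro (⟨c, rfl⟩ | rfl) x y hxy
  · have hleaf : ∀ u, u ≠ c → ndeg (starGraph c) u = 1 := fun u hu => by
      rw [ndeg_eq_degree, degree_starGraph_of_ne_center hu]
    have hcenter : ndeg (starGraph c) c = Fintype.card V - 1 := by
      rw [ndeg_eq_card_sub_one_iff]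
      exact isUniversal_starGraph_self
    obtain ⟨u, hu⟩ := exists_ne c
    have hδ1 : δ = 1 := le_antisymm (hleaf u hu ▸ hδ.2 ⟨u, rfl⟩) hδ0
    subst hδ1
    rcases starGraph_adj.1 hxy with ⟨hne, rfl | rfl⟩
    · exact Or.inr ⟨hcenter, hleaf y hne.symm⟩
    · exact Or.inl ⟨hleaf x hne, hcenter⟩
  · have hall : ∀ v, ndeg (⊤ : SimpleGraph V) v = Fintype.card V - 1 := fun v =>
      (ndeg_eq_card_sub_one_iff v).2 IsUniversal.top
    obtain ⟨v₀, hv₀⟩ := hδ.1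
    exact Or.inl ⟨(hall x).trans (hv₀ ▸ hall v₀).symm, hall y⟩

end Degrees

section EdgeSum

variable {V : Type*} [Fintype V] (G : SimpleGraph V) {f g : ℝ → ℝ → ℝ}

lemma mul_edgeSum (c : ℝ) :
    c * edgeSum G f = edgeSum G (fun x y => c * f x y) := by
  rw [edgeSum, edgeSum, mul_left_comm]
  simp only [Finset.mul_sum, mul_ite, mul_zero]

lemma edgeSum_le_edgeSum
    (h : ∀ u w, G.Adj u w → f (deg G u) (deg G w) ≤ g (deg G u) (deg G w)) :
    edgeSum G f ≤ edgeSum G g := by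
  unfold edgeSum
  gcongr with u _ w _
  split_ifs with huw
  exacts [h u w huw, le_rfl]

lemma edgeSum_eq_edgeSum_iff_of_le
    (h : ∀ u w, G.Adj u w → f (deg G u) (deg G w) ≤ g (deg G u) (deg G w)) :
    edgeSum G f = edgeSum G g ↔
      ∀ u w, G.Adj u w → f (deg G u) (deg G w) = g (deg G u) (deg G w) := by
  unfold edgeSum
  rw [mul_right_inj' (by norm_num), ← Finset.sum_product', ← Finset.sum_product',
    Finset.sum_eq_sum_iff_of_le fun i _ => by split_ifs with hi; exacts [h _ _ hi, le_rfl]]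
  simp only [Finset.mem_product, Finset.mem_univ, and_self, forall_const, Prod.forall]
  refine forall₂_congr fun u w => ?_
  by_cases huw : G.Adj u w <;> simp [huw]

end EdgeSum

section Indices

variable {V : Type*} [Fintype V] {G : SimpleGraph V}

lemma AG_le_half_mul_SDD (hpos : ∀ v, 0 < ndeg G v) : AG G ≤ 1 / 2 * SDD G := by
  rw [SDD, mul_edgeSum]
  exact edgeSum_le_edgeSum G fun u w _ =>
    agTerm_le_half_mul_sddTerm (Nat.cast_pos.2 (hpos u)) (Nat.cast_pos.2 (hpos w))

lemma AG_eq_half_mul_SDD_iff (hpos : ∀ v, 0 < ndeg G v) :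
    AG G = 1 / 2 * SDD G ↔ ∀ u w, G.Adj u w → ndeg G u = ndeg G w := by
  rw [AG, SDD, mul_edgeSum, edgeSum_eq_edgeSum_iff_of_le G fun u w _ =>
    agTerm_le_half_mul_sddTerm (Nat.cast_pos.2 (hpos u)) (Nat.cast_pos.2 (hpos w))]
  exact forall₂_congr fun u w => imp_congr_right fun _ =>
    (agTerm_eq_half_mul_sddTerm_iff (Nat.cast_pos.2 (hpos u)) (Nat.cast_pos.2 (hpos w))).trans
      Nat.cast_inj

variable {a b : ℕ}

lemma deg_mem_Icc (hdeg : ∀ v, ndeg G v ∈ Set.Icc a b) (v : V) :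
    deg G v ∈ Set.Icc (a : ℝ) b :=
  ⟨Nat.cast_le.2 (hdeg v).1, Nat.cast_le.2 (hdeg v).2⟩

lemma mul_SDD_le_AG (ha : 0 < a) (hdeg : ∀ v, ndeg G v ∈ Set.Icc a b) :
    ((a : ℝ) + b) * √(a * b) / (2 * ((a : ℝ) ^ 2 + b ^ 2)) * SDD G ≤ AG G := by
  rw [SDD, mul_edgeSum]
  exact edgeSum_le_edgeSum G fun u w _ =>
    mul_sddTerm_le_agTerm (Nat.cast_pos.2 ha) (deg_mem_Icc hdeg u) (deg_mem_Icc hdeg w)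

lemma mul_SDD_eq_AG_iff (ha : 0 < a) (hdeg : ∀ v, ndeg G v ∈ Set.Icc a b) :
    ((a : ℝ) + b) * √(a * b) / (2 * ((a : ℝ) ^ 2 + b ^ 2)) * SDD G = AG G ↔
      EdgesJoinDegrees G a b := by
  rw [AG, SDD, mul_edgeSum, edgeSum_eq_edgeSum_iff_of_le G fun u w _ =>
    mul_sddTerm_le_agTerm (Nat.cast_pos.2 ha) (deg_mem_Icc hdeg u) (deg_mem_Icc hdeg w)]
  refine forall₂_congr fun u w => imp_congr_right fun _ => ?_
  exact (mul_sddTerm_eq_agTerm_iff (Nat.cast_pos.2 ha) (deg_mem_Icc hdeg u)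
    (deg_mem_Icc hdeg w)).trans (by simp only [deg, Nat.cast_inj])

end Indices

/-- Theorem 10 of the paper: comparison of `AG` and `SDD`. -/
theorem stmt16 {V : Type*} [Fintype V] (G : SimpleGraph V) (hG : G.Connected)
    (n δ : ℕ) (hn : Fintype.card V = n) (hn2 : 2 ≤ n)
    (hδ : IsLeast (Set.range (ndeg G)) δ) :
    (((((δ : ℝ) + n - 1) * Real.sqrt ((δ : ℝ) * ((n : ℝ) - 1))) /
        (2 * ((δ : ℝ) ^ 2 + ((n : ℝ) - 1) ^ 2))) * SDD G ≤ AG G ∧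
      AG G ≤ (1 / 2) * SDD G) ∧
    (((((δ : ℝ) + n - 1) * Real.sqrt ((δ : ℝ) * ((n : ℝ) - 1))) /
        (2 * ((δ : ℝ) ^ 2 + ((n : ℝ) - 1) ^ 2))) * SDD G = AG G ↔
      Nonempty (G ≃g completeBipartiteGraph (Fin 1) (Fin (n - 1))) ∨
      Nonempty (G ≃g (⊤ : SimpleGraph (Fin n)))) ∧
    (AG G = (1 / 2) * SDD G ↔ ∀ v : V, ndeg G v = δ) := by
  have : Nontrivial V := Fintype.one_lt_card_iff_nontrivial.1 (by omega)
  have hpos : ∀ v, 0 < ndeg G v := hG.preconnected.ndeg_pos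
  obtain ⟨v₀, hv₀⟩ := hδ.1
  have hδ0 : 0 < δ := hv₀ ▸ hpos v₀
  have hdeg : ∀ v, ndeg G v ∈ Set.Icc δ (n - 1) := fun v =>
    ⟨hδ.2 ⟨v, rfl⟩, by have := ndeg_lt_card (G := G) v; omega⟩
  have hcoeff : ((δ : ℝ) + n - 1) * √(δ * ((n : ℝ) - 1)) /
        (2 * ((δ : ℝ) ^ 2 + ((n : ℝ) - 1) ^ 2)) =
      ((δ : ℝ) + (n - 1 : ℕ)) * √(δ * (n - 1 : ℕ)) /
        (2 * ((δ : ℝ) ^ 2 + (n - 1 : ℕ) ^ 2)) := by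
    rw [Nat.cast_sub (by omega), Nat.cast_one, add_sub_assoc]
  refine ⟨⟨hcoeff ▸ mul_SDD_le_AG hδ0 hdeg, AG_le_half_mul_SDD hpos⟩, ?_, ?_⟩
  · rw [hcoeff, mul_SDD_eq_AG_iff hδ0 hdeg, edgesJoinDegrees_iff hn hδ hδ0,
      nonempty_iso_completeBipartiteGraph_fin_one_iff hn, nonempty_iso_top_fin_iff hn]
  · rw [AG_eq_half_mul_SDD_iff hpos]
    refine ⟨fun h v => hv₀ ▸ hG.preconnected.eq_of_forall_adj h v v₀, fun h u w _ => ?_⟩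
    rw [h u, h w]
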